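/- The expected-end generating function E satisfies, in ℝ[[v]]: αβ·(1−v)³·(1+v+v²)·(E∘Z) = v·(vα+β)·(3v²β + 3α + 3vβ + vα + αv² + αv³). -/

import Mathlib

open PowerSeries Filter

noncomputable section

/-- Composition `h ∘ Z` of formal power series; this is the usual composition whenever
`Z` has zero constant term (then for each `n` only finitely many terms contribute). -/
def psComp (h Z : PowerSeries ℝ) : PowerSeries ℝ :=
  PowerSeries.mk fun n => ∑' k : ℕ, (PowerSeries.coeff k h) * (PowerSeries.coeff n (Z ^ k))

/-- The substitution series `Z = v · ((α+βv)(β+αv))⁻¹ ∈ ℝ[[v]]`; the inverse exists since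
the constant term `αβ` is nonzero, and `Z` has zero constant term. -/
def Zsub (α β : ℝ) : PowerSeries ℝ :=
  PowerSeries.X * (((PowerSeries.C α) + (PowerSeries.C β) * PowerSeries.X) *
    ((PowerSeries.C β) + (PowerSeries.C α) * PowerSeries.X))⁻¹

/-- The expected-end generating function `E = Σ_k 2k·f_k + Σ_k (2k+1)·g_k`; for each `n`
the support condition makes the series of `n`-th coefficients a finite sum. -/
def expectedEnd (f g : ℕ → PowerSeries ℝ) : PowerSeries ℝ :=
  PowerSeries.mk fun n =>
    ∑' k : ℕ, ((2 * k : ℝ) * PowerSeries.coeff n (f k)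
      + (2 * (k : ℝ) + 1) * PowerSeries.coeff n (g k))

/-! Substituting `z = Z(v)` and clearing the denominator `(α+βv)(β+αv) = αβ + (α²+β²)v + αβv²`
turns each bulk recurrence into `(1+v²)·F_N = v·(F_{N-1} + F_{N+1})`, i.e.
`F_N - v·F_{N-1} = v·(F_{N+1} - v·F_N)`. Iterating, that difference is divisible by every power
of `v`, so it vanishes: the substituted solutions are geometric, `F_{N+1} = v^N F_1` and
`G_N = v^N G_0`. The boundary equations then become a linear system over `ℝ[[v]]` that determines
`F_0`, `F_1`, `G_0`, `F_Q` rationally, and summing the geometric series gives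
`(1-v)²·(E∘Z) = 2F_1 + (1+v)G_0`.

Composition with `Z` is an `ℝ`-algebra map, so `F_k = f_k∘Z`, `G_k = g_k∘Z`, `F_Q = f_Q∘Z` satisfy
the system with `z` replaced by `Z`; it commutes with the infinite sum defining `E` because the
support condition makes every coefficient a finite sum. -/

open Finset

namespace PowerSeries

variable {R : Type*}

theorem eq_zero_of_forall_eq_X_mul [Semiring R] {d : ℕ → R⟦X⟧}
    (h : ∀ N, d N = X * d (N + 1)) (N : ℕ) : d N = 0 := by
  have hpow : ∀ m N, d N = X ^ m * d (N + m) := by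
    intro m
    induction m with
    | zero => simp
    | succ m ih => intro N; rw [ih, h, ← mul_assoc, ← pow_succ, add_assoc]
  ext n
  rw [hpow (n + 1), coeff_X_pow_mul', if_neg (by omega), map_zero]

theorem coeff_mk_mul_eq_sum [Semiring R] (a : ℕ → R) (P : R⟦X⟧) (n : ℕ) :
    coeff n (mk a * P) = ∑ k ∈ range (n + 1), a k * coeff n (X ^ k * P) := by
  rw [coeff_mul, Nat.sum_antidiagonal_eq_sum_range_succ (fun i j => coeff i (mk a) * coeff j P)]
  refine sum_congr rfl fun k hk => ?_
  rw [coeff_mk, coeff_X_pow_mul', if_pos (by simp at hk; omega)]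

section CommRing

variable [CommRing R]

theorem one_sub_X_sq_mul_mk_succ : (1 - X : R⟦X⟧) ^ 2 * mk (fun n => (n + 1 : R)) = 1 := by
  have hsq : mk (fun n => (n + 1 : R)) = mk 1 ^ 2 := by
    rw [mk_one_pow_eq_mk_choose_add]
    simp [add_comm]
  rw [hsq, ← mul_pow, mul_comm, mk_one_mul_one_sub_eq_one, one_pow]

theorem mk_two_mul : mk (fun n => (2 * n : R)) = 2 * X * mk (fun n => (n + 1 : R)) := by
  ext (_ | n)
  · simp
  · rw [mul_assoc, two_mul, map_add, coeff_succ_X_mul, coeff_mk, coeff_mk]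
    push_cast
    ring

theorem mk_two_mul_add_one :
    mk (fun n => (2 * n + 1 : R)) = (1 + X) * mk (fun n => (n + 1 : R)) := by
  ext (_ | n)
  · simp
  · simp [add_mul, coeff_succ_X_mul]
    ring

variable {Z : R⟦X⟧}

theorem X_pow_dvd_subst (hZ : constantCoeff Z = 0) {h : R⟦X⟧} {k : ℕ} (hk : X ^ k ∣ h) :
    X ^ k ∣ h.subst Z := by
  have hZsubst : HasSubst Z := .of_constantCoeff_zero' hZ
  obtain ⟨q, rfl⟩ := hk
  obtain ⟨w, rfl⟩ := X_dvd_iff.2 hZ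
  rw [subst_mul hZsubst, subst_pow hZsubst, subst_X hZsubst, mul_pow, mul_assoc]
  exact dvd_mul_right _ _

theorem coeff_subst_congr (hZ : constantCoeff Z = 0) {h h' : R⟦X⟧} {n : ℕ}
    (hcoeff : ∀ i ≤ n, coeff i h = coeff i h') : coeff n (h.subst Z) = coeff n (h'.subst Z) := by
  have hdvd : X ^ (n + 1) ∣ (h - h').subst Z :=
    X_pow_dvd_subst hZ <| X_pow_dvd_iff.2 fun m hm => by
      rw [map_sub, hcoeff m (Nat.le_of_lt_succ hm), sub_self]
  rw [subst_sub (.of_constantCoeff_zero' hZ)] at hdvd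
  exact sub_eq_zero.1 <| by simpa using X_pow_dvd_iff.1 hdvd n n.lt_succ_self

theorem coeff_subst_eq_zero_of_lt (hZ : constantCoeff Z = 0) {h : R⟦X⟧} {k : ℕ}
    (hh : ∀ m < k, coeff m h = 0) {m : ℕ} (hm : m < k) : coeff m (h.subst Z) = 0 :=
  X_pow_dvd_iff.1 (X_pow_dvd_subst hZ (X_pow_dvd_iff.2 hh)) m hm

end CommRing

end PowerSeries

theorem psComp_eq_subst {Z : ℝ⟦X⟧} (hZ : constantCoeff Z = 0) (h : ℝ⟦X⟧) :
    psComp h Z = h.subst Z := by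
  ext n
  rw [psComp, coeff_mk, coeff_subst' (.of_constantCoeff_zero' hZ), ← tsum_eq_finsum
    (L := .unconditional ℕ) (coeff_subst_finite' (.of_constantCoeff_zero' hZ) h n)]
  rfl

section ExpectedEnd

variable {f g : ℕ → ℝ⟦X⟧}

theorem coeff_expectedEnd_eq_sum (hf : ∀ m k, m < k → coeff m (f k) = 0)
    (hg : ∀ m k, m < k → coeff m (g k) = 0) {n N : ℕ} (hn : n < N) :
    coeff n (expectedEnd f g) =
      ∑ k ∈ range N, ((2 * k : ℝ) * coeff n (f k) + (2 * k + 1 : ℝ) * coeff n (g k)) := by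
  rw [expectedEnd, coeff_mk]
  refine tsum_eq_sum fun k hk => ?_
  have hnk : n < k := by simp at hk; omega
  rw [hf n k hnk, hg n k hnk, mul_zero, mul_zero, add_zero]

theorem subst_expectedEnd {Z : ℝ⟦X⟧} (hZ : constantCoeff Z = 0)
    (hf : ∀ m k, m < k → coeff m (f k) = 0) (hg : ∀ m k, m < k → coeff m (g k) = 0) :
    (expectedEnd f g).subst Z =
      expectedEnd (fun k => (f k).subst Z) (fun k => (g k).subst Z) := by
  ext n
  set T := ∑ k ∈ range (n + 1), ((2 * k : ℝ) • f k + (2 * k + 1 : ℝ) • g k)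
  have hT : ∀ i ≤ n, coeff i (expectedEnd f g) = coeff i T := fun i hi => by
    rw [coeff_expectedEnd_eq_sum hf hg (Nat.lt_succ_of_le hi)]
    simp only [T, map_sum, map_add, coeff_smul, smul_eq_mul]
  rw [coeff_subst_congr hZ hT, coeff_expectedEnd_eq_sum
    (fun m k => coeff_subst_eq_zero_of_lt hZ (hf · k))
    (fun m k => coeff_subst_eq_zero_of_lt hZ (hg · k)) n.lt_succ_self,
    ← coe_substAlgHom (.of_constantCoeff_zero' hZ), map_sum]
  simp only [map_sum, map_add, map_smul, smul_eq_mul, coe_substAlgHom]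

theorem expectedEnd_X_pow_mul (P N : ℝ⟦X⟧) :
    expectedEnd (fun k => X ^ k * P) (fun k => X ^ k * N) =
      PowerSeries.mk (fun n => (2 * n : ℝ)) * P
        + PowerSeries.mk (fun n => (2 * n + 1 : ℝ)) * N := by
  ext n
  have hord (Q : ℝ⟦X⟧) (m k : ℕ) (hmk : m < k) : coeff m (X ^ k * Q) = 0 := by
    rw [coeff_X_pow_mul', if_neg (by omega)]
  rw [coeff_expectedEnd_eq_sum (hord P) (hord N) n.lt_succ_self, map_add, coeff_mk_mul_eq_sum,
    coeff_mk_mul_eq_sum, sum_add_distrib]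

end ExpectedEnd

theorem expectedEnd_of_eq_X_pow_mul {F G : ℕ → ℝ⟦X⟧} (hF : ∀ k, F (k + 1) = X ^ k * F 1)
    (hG : ∀ k, G k = X ^ k * G 0) (hF1 : constantCoeff (F 1) = 0) :
    (1 - X) ^ 2 * expectedEnd F G = 2 * F 1 + (1 + X) * G 0 := by
  obtain ⟨P, hP⟩ := X_dvd_iff.2 hF1
  have hE : expectedEnd F G = expectedEnd (fun k => X ^ k * P) (fun k => X ^ k * G 0) := by
    ext n
    simp only [expectedEnd, coeff_mk]
    congr with k
    rcases k with _ | k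
    · simp
    · rw [hF, hP, hG, ← mul_assoc, ← pow_succ]
  rw [hE, expectedEnd_X_pow_mul, mk_two_mul, mk_two_mul_add_one, hP]
  linear_combination (2 * X * P + (1 + X) * G 0) * one_sub_X_sq_mul_mk_succ (R := ℝ)

/-- The two-step Knödel–Böhm–Hornik system with the variable `z` replaced by `T`. -/
structure KBHSystem (α β : ℝ) (T : ℝ⟦X⟧) (f g : ℕ → ℝ⟦X⟧) (fQ : ℝ⟦X⟧) : Prop where
  f_bulk : ∀ N : ℕ, f (N + 2) = C (α * β) * T * f (N + 1) + C (α * β) * T * f (N + 3)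
    + C (α ^ 2 + β ^ 2) * T * f (N + 2)
  f_one : f 1 = C (α * β) * T * f 0 + C (α * β) * T * f 2
    + C (α ^ 2 + β ^ 2) * T * f 1 + C (β ^ 2) * T * fQ
  f_zero : f 0 = 1 + C (α * β) * T * f 1 + C (α ^ 2 + β ^ 2) * T * f 0 + C (α * β) * T * fQ
  fQ_eq : fQ = C (α * β) * T * g 0 + C (α ^ 2) * T * fQ
  g_bulk : ∀ N : ℕ, g (N + 1) = C (α * β) * T * g N + C (α * β) * T * g (N + 2)
    + C (α ^ 2 + β ^ 2) * T * g (N + 1)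
  g_zero : g 0 = C (α * β) * T * f 0 + C (α * β) * T * g 1
    + C (α * β) * T * fQ + C (α ^ 2 + β ^ 2) * T * g 0

namespace KBHSystem

variable {α β : ℝ} {T : ℝ⟦X⟧} {f g : ℕ → ℝ⟦X⟧} {fQ : ℝ⟦X⟧}

theorem map (hs : KBHSystem α β T f g fQ) (φ : ℝ⟦X⟧ →ₐ[ℝ] ℝ⟦X⟧) :
    KBHSystem α β (φ T) (fun k => φ (f k)) (fun k => φ (g k)) (φ fQ) := by
  have hC (c : ℝ) : φ (C c) = C c := φ.commutes c
  constructor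
  · exact fun N => by simpa only [map_add, map_mul, hC] using congrArg φ (hs.f_bulk N)
  · simpa only [map_add, map_mul, hC] using congrArg φ hs.f_one
  · simpa only [map_add, map_mul, map_one, hC] using congrArg φ hs.f_zero
  · simpa only [map_add, map_mul, hC] using congrArg φ hs.fQ_eq
  · exact fun N => by simpa only [map_add, map_mul, hC] using congrArg φ (hs.g_bulk N)
  · simpa only [map_add, map_mul, hC] using congrArg φ hs.g_zero

section Solution

variable {Z : ℝ⟦X⟧} {F G : ℕ → ℝ⟦X⟧} {FQ : ℝ⟦X⟧}

theorem f_succ_succ_eq_X_mul (hs : KBHSystem α β Z F G FQ)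
    (hZD : Z * ((C α + C β * X) * (C β + C α * X)) = X)
    (hα : α ≠ 0) (hβ : β ≠ 0) (N : ℕ) :
    F (N + 2) = X * F (N + 1) := by
  have hAB : C α * C β ≠ (0 : ℝ⟦X⟧) := by simp [hα, hβ]
  refine sub_eq_zero.1 <| eq_zero_of_forall_eq_X_mul (d := fun M => F (M + 2) - X * F (M + 1))
    (fun M => mul_left_cancel₀ hAB ?_) N
  have h := hs.f_bulk M
  simp only [map_mul, map_add, map_pow] at h
  linear_combination (C α + C β * X) * (C β + C α * X) * h
    + (C α * C β * F (M + 1) + C α * C β * F (M + 3) + (C α ^ 2 + C β ^ 2) * F (M + 2)) * hZD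

theorem g_succ_eq_X_mul (hs : KBHSystem α β Z F G FQ)
    (hZD : Z * ((C α + C β * X) * (C β + C α * X)) = X)
    (hα : α ≠ 0) (hβ : β ≠ 0) (N : ℕ) :
    G (N + 1) = X * G N := by
  have hAB : C α * C β ≠ (0 : ℝ⟦X⟧) := by simp [hα, hβ]
  refine sub_eq_zero.1 <| eq_zero_of_forall_eq_X_mul (d := fun M => G (M + 1) - X * G M)
    (fun M => mul_left_cancel₀ hAB ?_) N
  have h := hs.g_bulk M
  simp only [map_mul, map_add, map_pow] at h
  linear_combination (C α + C β * X) * (C β + C α * X) * h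
    + (C α * C β * G M + C α * C β * G (M + 2) + (C α ^ 2 + C β ^ 2) * G (M + 1)) * hZD

theorem f_succ_eq_X_pow_mul (hs : KBHSystem α β Z F G FQ)
    (hZD : Z * ((C α + C β * X) * (C β + C α * X)) = X)
    (hα : α ≠ 0) (hβ : β ≠ 0) (N : ℕ) :
    F (N + 1) = X ^ N * F 1 := by
  induction N with
  | zero => rw [pow_zero, one_mul]
  | succ N ih => rw [hs.f_succ_succ_eq_X_mul hZD hα hβ, ih, pow_succ', mul_assoc]

theorem g_eq_X_pow_mul (hs : KBHSystem α β Z F G FQ)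
    (hZD : Z * ((C α + C β * X) * (C β + C α * X)) = X)
    (hα : α ≠ 0) (hβ : β ≠ 0) (N : ℕ) :
    G N = X ^ N * G 0 := by
  induction N with
  | zero => rw [pow_zero, one_mul]
  | succ N ih => rw [hs.g_succ_eq_X_mul hZD hα hβ, ih, pow_succ', mul_assoc]

theorem g_zero_eq_X_mul (hs : KBHSystem α β Z F G FQ)
    (hZD : Z * ((C α + C β * X) * (C β + C α * X)) = X)
    (hα : α ≠ 0) (hβ : β ≠ 0) :
    G 0 = X * (F 0 + FQ) := by
  have hAB : C α * C β ≠ (0 : ℝ⟦X⟧) := by simp [hα, hβ]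
  refine mul_left_cancel₀ hAB ?_
  have h := hs.g_zero
  simp only [map_mul, map_add, map_pow] at h
  linear_combination (C α + C β * X) * (C β + C α * X) * h
    + (C α * C β * F 0 + C α * C β * G 1 + C α * C β * FQ + (C α ^ 2 + C β ^ 2) * G 0) * hZD
    + C α * C β * X * hs.g_succ_eq_X_mul hZD hα hβ 0

theorem fQ_eq_f_zero (hs : KBHSystem α β Z F G FQ)
    (hZD : Z * ((C α + C β * X) * (C β + C α * X)) = X)
    (hα : α ≠ 0) (hβ : β ≠ 0) :
    (C α + C β * X) * FQ = C α * X ^ 2 * F 0 := by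
  have hB : C β ≠ (0 : ℝ⟦X⟧) := by simp [hβ]
  refine mul_left_cancel₀ hB ?_
  have h := hs.fQ_eq
  simp only [map_mul, map_pow] at h
  linear_combination (C α + C β * X) * (C β + C α * X) * h
    + (C α * C β * G 0 + C α ^ 2 * FQ) * hZD + C α * C β * X * hs.g_zero_eq_X_mul hZD hα hβ

theorem f_one_eq_f_zero (hs : KBHSystem α β Z F G FQ)
    (hZD : Z * ((C α + C β * X) * (C β + C α * X)) = X)
    (hα : α ≠ 0) (hβ : β ≠ 0) :
    (C α + C β * X) * F 1 = X * F 0 * (C α + C β * X + C β * X ^ 2) := by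
  have hAB : C α * C β ≠ (0 : ℝ⟦X⟧) := by simp [hα, hβ]
  refine mul_left_cancel₀ hAB ?_
  have h := hs.f_one
  simp only [map_mul, map_add, map_pow] at h
  linear_combination (C α + C β * X) * ((C α + C β * X) * (C β + C α * X) * h
    + (C α * C β * F 0 + C α * C β * F 2 + (C α ^ 2 + C β ^ 2) * F 1 + C β ^ 2 * FQ) * hZD)
    + C α * C β * X * (C α + C β * X) * hs.f_succ_succ_eq_X_mul hZD hα hβ 0
    + C β ^ 2 * X * hs.fQ_eq_f_zero hZD hα hβ

theorem g_zero_eq_f_zero (hs : KBHSystem α β Z F G FQ)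
    (hZD : Z * ((C α + C β * X) * (C β + C α * X)) = X)
    (hα : α ≠ 0) (hβ : β ≠ 0) :
    (C α + C β * X) * G 0 = X * F 0 * (C α + C β * X + C α * X ^ 2) := by
  linear_combination
    (C α + C β * X) * hs.g_zero_eq_X_mul hZD hα hβ + X * hs.fQ_eq_f_zero hZD hα hβ

theorem f_zero_eq (hs : KBHSystem α β Z F G FQ)
    (hZD : Z * ((C α + C β * X) * (C β + C α * X)) = X)
    (hα : α ≠ 0) (hβ : β ≠ 0) :
    C α * C β * (1 - X ^ 3) * F 0 = (C α + C β * X) * (C β + C α * X) := by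
  have hA : C α + C β * X ≠ 0 := fun h => hα (by simpa using congrArg constantCoeff h)
  refine mul_left_cancel₀ hA ?_
  have h := hs.f_zero
  simp only [map_mul, map_add, map_pow] at h
  linear_combination (C α + C β * X) * ((C α + C β * X) * (C β + C α * X) * h
    + (C α * C β * F 1 + (C α ^ 2 + C β ^ 2) * F 0 + C α * C β * FQ) * hZD)
    + C α * C β * X * hs.f_one_eq_f_zero hZD hα hβ
    + C α * C β * X * hs.fQ_eq_f_zero hZD hα hβ

theorem expectedEnd_eq (hs : KBHSystem α β Z F G FQ)
    (hZD : Z * ((C α + C β * X) * (C β + C α * X)) = X)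
    (hα : α ≠ 0) (hβ : β ≠ 0) :
    C (α * β) * (1 - X) ^ 3 * (1 + X + X ^ 2) * expectedEnd F G =
      X * (X * C α + C β) * (C (3 * β) * X ^ 2 + C (3 * α) + C (3 * β) * X
        + C α * X + C α * X ^ 2 + C α * X ^ 3) := by
  have hA : C α + C β * X ≠ 0 := fun h => hα (by simpa using congrArg constantCoeff h)
  have hF1 := hs.f_one_eq_f_zero hZD hα hβ
  have hF1_zero : constantCoeff (F 1) = 0 := by
    simpa [hα] using congrArg constantCoeff hF1
  have hE := expectedEnd_of_eq_X_pow_mul (hs.f_succ_eq_X_pow_mul hZD hα hβ)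
    (hs.g_eq_X_pow_mul hZD hα hβ) hF1_zero
  refine mul_left_cancel₀ hA ?_
  simp only [map_mul, map_ofNat]
  linear_combination C α * C β * (1 - X) * (1 + X + X ^ 2) * (C α + C β * X) * hE
    + C α * C β * (1 - X ^ 3) * (2 * hF1 + (1 + X) * hs.g_zero_eq_f_zero hZD hα hβ)
    + X * (3 * C β * X ^ 2 + 3 * C α + 3 * C β * X + C α * X + C α * X ^ 2 + C α * X ^ 3)
      * hs.f_zero_eq hZD hα hβ

end Solution

end KBHSystem

theorem constantCoeff_Zsub (α β : ℝ) : constantCoeff (Zsub α β) = 0 := by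
  simp [Zsub]

theorem Zsub_mul {α β : ℝ} (hα : α ≠ 0) (hβ : β ≠ 0) :
    Zsub α β * ((C α + C β * X) * (C β + C α * X)) = X := by
  rw [Zsub, mul_assoc, PowerSeries.inv_mul_cancel _ (by simp [hα, hβ]), mul_one]

/-- The expected-end generating function becomes rational after the substitution:
`αβ(1-v)³(1+v+v²)·(E∘Z) = v(vα+β)(3v²β+3α+3vβ+vα+αv²+αv³)`. -/
theorem expectedEnd_substituted
    (α β : ℝ) (hα0 : 0 < α) (hα1 : α < 1) (hβ : β = 1 - α)
    (f g : ℕ → PowerSeries ℝ) (fQ : PowerSeries ℝ)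
    (hf : ∀ N : ℕ, f (N + 2) =
      C (α * β) * X * f (N + 1) + C (α * β) * X * f (N + 3)
        + C (α ^ 2 + β ^ 2) * X * f (N + 2))
    (hf1 : f 1 = C (α * β) * X * f 0 + C (α * β) * X * f 2
        + C (α ^ 2 + β ^ 2) * X * f 1 + C (β ^ 2) * X * fQ)
    (hf0 : f 0 = 1 + C (α * β) * X * f 1 + C (α ^ 2 + β ^ 2) * X * f 0
        + C (α * β) * X * fQ)
    (hfQ : fQ = C (α * β) * X * g 0 + C (α ^ 2) * X * fQ)
    (hg : ∀ N : ℕ, g (N + 1) = C (α * β) * X * g N + C (α * β) * X * g (N + 2)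
        + C (α ^ 2 + β ^ 2) * X * g (N + 1))
    (hg0 : g 0 = C (α * β) * X * f 0 + C (α * β) * X * g 1
        + C (α * β) * X * fQ + C (α ^ 2 + β ^ 2) * X * g 0)
    (hsupp : ∀ m N : ℕ, m < N → coeff m (f N) = 0 ∧ coeff m (g N) = 0) :
    C (α * β) * (1 - X) ^ 3 * (1 + X + X ^ 2) * psComp (expectedEnd f g) (Zsub α β) =
      X * (X * C α + C β) * (C (3 * β) * X ^ 2 + C (3 * α) + C (3 * β) * X
        + C α * X + C α * X ^ 2 + C α * X ^ 3) := by
  have hα : α ≠ 0 := hα0.ne'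
  have hβ0 : β ≠ 0 := hβ ▸ sub_ne_zero.2 hα1.ne'
  have hZ := constantCoeff_Zsub α β
  have hs : KBHSystem α β X f g fQ := ⟨hf, hf1, hf0, hfQ, hg, hg0⟩
  have hsZ := hs.map (substAlgHom (.of_constantCoeff_zero' hZ))
  rw [substAlgHom_X, coe_substAlgHom] at hsZ
  rw [psComp_eq_subst hZ, subst_expectedEnd hZ (fun m k h => (hsupp m k h).1)
    (fun m k h => (hsupp m k h).2)]
  exact hsZ.expectedEnd_eq (Zsub_mul hα hβ0) hα hβ0
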